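/- Let A be a serial finite length abelian category, let S be a class of indecomposable objects of A, and let M be an indecomposable object of A. If there exists a monomorphism M → X₁ ⊞ ⋯ ⊞ X_m for some finite list of objects X₁, …, X_m of S, then there exists a monomorphism M → X for a single object X of S. (In other words, the indecomposable objects of Cogen(add S) coincide with the indecomposable objects of Cogen S.) -/

import Mathlib

open CategoryTheory CategoryTheory.Limits

universe v u

attribute [local instance] CategoryTheory.Abelian.hasFiniteBiproducts

variable {A : Type u} [Category.{v} A] [Abelian A]

/-- An object is uniserial if its subobjects are totally ordered by inclusion. -/
def Uniserial (U : A) : Prop :=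
  ∀ P Q : Subobject U, P ≤ Q ∨ Q ≤ P

/-- A category is serial if every object is isomorphic to a finite biproduct of
uniserial objects. -/
def IsSerial (A : Type u) [Category.{v} A] [Abelian A] : Prop :=
  ∀ X : A, ∃ (m : ℕ) (Y : Fin m → A),
    (∀ i, Uniserial (Y i)) ∧ Nonempty (X ≅ ⨁ Y)

/-- An object is indecomposable if it is nonzero and in any decomposition as a
biproduct one of the summands is zero. -/
def Indec (X : A) : Prop :=
  ¬ IsZero X ∧ ∀ B C : A, Nonempty (X ≅ B ⊞ C) → IsZero B ∨ IsZero C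

/-!
An indecomposable object `M` of a serial category is uniserial, so the kernels of the
components `M ⟶ Xᵢ` of a monomorphism `g : M ⟶ ⨁ Xᵢ` form a finite chain of subobjects
of `M`.
The smallest of them is contained in every kernel, hence in `ker g = 0`, so the corresponding
component is already a monomorphism.
-/

lemma isZero_biproduct_of_isEmpty {C : Type*} [Category C] [HasZeroMorphisms C]
    {J : Type*} [IsEmpty J] (f : J → C) [HasBiproduct f] : IsZero (⨁ f) := by
  rw [IsZero.iff_id_eq_zero]
  exact biproduct.hom_ext _ _ isEmptyElim

noncomputable def biproductFinSuccIso {C : Type*} [Category C] [Preadditive C]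
    [HasFiniteBiproducts C] [HasBinaryBiproducts C] {n : ℕ} (Y : Fin (n + 1) → C) :
    (⨁ Y) ≅ Y 0 ⊞ ⨁ (Y ∘ Fin.succ) where
  hom := biprod.lift (biproduct.π Y 0) (biproduct.lift fun i => biproduct.π Y i.succ)
  inv := biprod.desc (biproduct.ι Y 0) (biproduct.desc fun i => biproduct.ι Y i.succ)
  hom_inv_id := by
    rw [biprod.lift_desc, biproduct.lift_desc, ← biproduct.total, Fin.sum_univ_succ]
  inv_hom_id := by
    ext <;> simp [biproduct.ι_π, biproduct.ι_π_ne _ (Fin.succ_ne_zero _),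
      biproduct.ι_π_ne _ (Fin.succ_ne_zero _).symm, Fin.succ_inj]

lemma Uniserial.of_iso {C : Type*} [Category C] {X Y : C} (e : X ≅ Y) (h : Uniserial Y) :
    Uniserial X := by
  let φ := Subobject.mapIsoToOrderIso e
  intro P Q
  simpa only [φ.le_iff_le] using h (φ P) (φ Q)

lemma Indec.exists_iso_of_iso_biproduct {X : A} (hX : Indec X) :
    ∀ {n : ℕ} {Y : Fin n → A}, (X ≅ ⨁ Y) → ∃ j, Nonempty (X ≅ Y j)
  | 0, Y, e => absurd ((isZero_biproduct_of_isEmpty Y).of_iso e) hX.1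
  | _ + 1, Y, e => by
    let e' := e ≪≫ biproductFinSuccIso Y
    rcases hX.2 _ _ ⟨e'⟩ with h0 | hrest
    · obtain ⟨j, ⟨ej⟩⟩ := hX.exists_iso_of_iso_biproduct
        (e' ≪≫ (isoZeroBiprod (Y := ⨁ (Y ∘ Fin.succ)) h0).symm)
      exact ⟨j.succ, ⟨ej⟩⟩
    · exact ⟨0, ⟨e' ≪≫ (isoBiprodZero hrest).symm⟩⟩

lemma IsSerial.uniserial_of_indec (hser : IsSerial A) {M : A} (hM : Indec M) : Uniserial M := by
  obtain ⟨_, Y, hY, ⟨e⟩⟩ := hser M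
  obtain ⟨j, ⟨ej⟩⟩ := hM.exists_iso_of_iso_biproduct e
  exact (hY j).of_iso ej

lemma mono_comp_π_of_forall_kernelSubobject_le {M : A} {J : Type*} {f : J → A}
    [HasBiproduct f] (g : M ⟶ ⨁ f) [Mono g] (j : J)
    (hj : ∀ i,
      kernelSubobject (g ≫ biproduct.π f j) ≤ kernelSubobject (g ≫ biproduct.π f i)) :
    Mono (g ≫ biproduct.π f j) := by
  have hker_comp : (kernelSubobject (g ≫ biproduct.π f j)).arrow ≫ g = 0 := by
    refine biproduct.hom_ext _ _ fun i => ?_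
    rw [zero_comp, Category.assoc, ← Subobject.ofLE_arrow (hj i), Category.assoc,
      kernelSubobject_arrow_comp, comp_zero]
  have hker : (kernelSubobject (g ≫ biproduct.π f j)).arrow = 0 := by
    rwa [← cancel_mono g, zero_comp]
  apply Abelian.mono_of_kernel_ι_eq_zero
  rw [← kernelSubobject_arrow', hker, comp_zero]

lemma Uniserial.exists_mono_comp_π {M : A} (hM : Uniserial M) (hM0 : ¬IsZero M)
    {J : Type*} [Finite J] {f : J → A} [HasBiproduct f] (g : M ⟶ ⨁ f) [Mono g] :
    ∃ j, Mono (g ≫ biproduct.π f j) := by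
  have : Nonempty J := by
    by_contra hJ
    have := not_nonempty_iff.mp hJ
    exact hM0 ((isZero_biproduct_of_isEmpty f).of_mono g)
  let K := fun i => kernelSubobject (g ≫ biproduct.π f i)
  have hK : Directed (· ≥ ·) K := fun a b =>
    (hM (K a) (K b)).elim (fun h => ⟨a, le_rfl, h⟩) (fun h => ⟨b, h, le_rfl⟩)
  obtain ⟨j, hj⟩ := hK.finite_le id
  exact ⟨j, mono_comp_π_of_forall_kernelSubobject_le g j hj⟩

theorem indec_cogen_add_eq_cogen
    -- `A` is a serial finite length abelian category
    [∀ X : A, IsArtinianObject X] [∀ X : A, IsNoetherianObject X]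
    (hser : IsSerial A)
    (S : Set A) (hS : ∀ X ∈ S, Indec X) (M : A) (hM : Indec M)
    (h : ∃ (m : ℕ) (Xs : Fin m → A), (∀ i, Xs i ∈ S) ∧
      ∃ g : M ⟶ ⨁ Xs, Mono g) :
    ∃ X ∈ S, ∃ g : M ⟶ X, Mono g := by
  obtain ⟨m, Xs, hXs, g, hg⟩ := h
  obtain ⟨j, hj⟩ := (hser.uniserial_of_indec hM).exists_mono_comp_π hM.1 g
  exact ⟨Xs j, hXs j, g ≫ biproduct.π Xs j, hj⟩
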